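/- arXiv:1701.03902 — 2 statements merged into one kernel-verified Lean document; each statement's English description precedes it below -/
import Mathlib

section
/- Let A be an implication algebra and φ a closure endomorphism of A. Then the fixpoint set F_φ = {x ∈ A : φ(x) = x} is a filter of A. -/
/-- A Hilbert algebra: a set with implication `imp` and constant `one`. -/
class HilbertAlgebra (A : Type*) where
  imp : A → A → A
  one : A
  imp_one : ∀ x y : A, imp x (imp y x) = one
  imp_distrib : ∀ x y z : A,
    imp (imp x (imp y z)) (imp (imp x y) (imp x z)) = one
  imp_antisymm : ∀ x y : A, imp x y = one → imp y x = one → x = y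

namespace HilbertAlgebra

variable {A : Type*} [HilbertAlgebra A]

/-- The natural order of a Hilbert algebra: `x ≤ y` iff `x → y = 1`. -/
def le (x y : A) : Prop := imp x y = one

/-- A closure endomorphism: an endomorphism that is also a closure operator. -/
def IsClosureEndo (φ : A → A) : Prop :=
  (∀ x y : A, φ (imp x y) = imp (φ x) (φ y)) ∧
  (∀ x : A, le x (φ x)) ∧
  (∀ x : A, φ (φ x) = φ x) ∧
  (∀ x y : A, le x y → le (φ x) (φ y))

/-- A filter of a Hilbert algebra. -/
def IsFilter (J : Set A) : Prop :=
  (one : A) ∈ J ∧ ∀ x y : A, x ∈ J → imp x y ∈ J → y ∈ J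

lemma imp_top' (z : A) : imp z (one : A) = one := by
  have hb : imp (one : A) (imp z one) = one := imp_one one z
  have ha : imp (imp z (one : A)) (imp (one : A) (imp z one)) = one :=
    imp_one (imp z one) one
  rw [hb] at ha
  exact imp_antisymm _ _ ha hb

lemma eq_one_of_one_imp' {a : A} (h : imp (one : A) a = one) : a = one :=
  imp_antisymm a one (imp_top' a) h

lemma imp_refl' (a : A) : imp a a = one := by
  have D := imp_distrib a (imp one a) a
  rw [imp_one a (imp one a)] at D
  have D' : imp (imp a (imp one a)) (imp a a) = one := eq_one_of_one_imp' D
  rw [imp_one a one] at D'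
  exact eq_one_of_one_imp' D'

lemma one_imp' (a : A) : imp (one : A) a = a := by
  have D := imp_distrib (imp (one : A) a) one a
  rw [imp_refl' (imp (one : A) a), imp_top' (imp (one : A) a)] at D
  have D' := eq_one_of_one_imp' D
  have D'' : imp (imp (one : A) a) a = one := eq_one_of_one_imp' D'
  exact imp_antisymm _ _ D'' (imp_one a one)

lemma imp_trans' {a b c : A} (hab : imp a b = one) (hbc : imp b c = one) :
    imp a c = one := by
  have D := imp_distrib a b c
  rw [hbc, imp_top' a, one_imp', hab, one_imp'] at D
  exact D

lemma imp_mono' {a b c : A} (h : imp a (imp b c) = one) :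
    imp (imp a b) (imp a c) = one := by
  have D := imp_distrib a b c
  rw [h, one_imp'] at D
  exact D

lemma imp_exchange' {a b c : A} (h : imp a (imp b c) = one) :
    imp b (imp a c) = one :=
  imp_trans' (imp_one b a) (imp_mono' h)

lemma imp_antitone' {a b c : A} (h : imp a b = one) :
    imp (imp b c) (imp a c) = one := by
  have h1 : imp b (imp (imp b c) c) = one := imp_exchange' (imp_refl' (imp b c))
  exact imp_exchange' (imp_trans' h h1)

/-- For a closure endomorphism `φ` and a fixed point `f`, `φ a → f = a → f`. -/
lemma closure_imp_fixed' {φ : A → A} (hφ : IsClosureEndo φ) {f : A}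
    (hf : φ f = f) (a : A) : imp (φ a) f = imp a f := by
  obtain ⟨hhom, hle, _, _⟩ := hφ
  have e1 : φ (imp a f) = imp (φ a) f := by rw [hhom, hf]
  have le1 : imp (imp a f) (φ (imp a f)) = one := hle (imp a f)
  rw [e1] at le1
  have le2 : imp (imp (φ a) f) (imp a f) = one := imp_antitone' (hle a)
  exact imp_antisymm _ _ le2 le1

/-- In an implication algebra, the fixpoint set of a closure endomorphism is a
filter. -/
theorem fixpoints_filter_of_implicationAlgebra
    (himp : ∀ x y : A, imp (imp x y) x = x)
    (φ : A → A) (hφ : IsClosureEndo φ) :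
    IsFilter {x : A | φ x = x} := by
  obtain ⟨hhom, hle, hidem, hmono⟩ := hφ
  constructor
  · exact imp_antisymm _ _ (imp_top' (φ one)) (hle one)
  · intro x y hx hxy
    have hx : φ x = x := hx
    have hxy : φ (imp x y) = imp x y := hxy
    -- φ y ≤ x → y
    have h1 : imp (φ y) (imp x y) = one := by
      have := closure_imp_fixed' ⟨hhom, hle, hidem, hmono⟩ hxy y
      rw [this]
      exact imp_one y x
    -- x ≤ (φ y → y)
    have h2 : imp x (imp (φ y) y) = one := imp_exchange' h1
    -- φ (φ y → y) = 1
    have hφt : φ (imp (φ y) y) = one := by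
      rw [hhom, hidem, imp_refl']
    -- (φ y → y) → x = x
    have h4 : imp (imp (φ y) y) x = x := by
      have := closure_imp_fixed' ⟨hhom, hle, hidem, hmono⟩ hx (imp (φ y) y)
      rw [hφt, one_imp'] at this
      exact this.symm
    -- Peirce: ((t → x) → t) = t, so (x → t) = t, but x → t = 1, so t = 1
    have h5 : imp (φ y) y = one := by
      have hp := himp (imp (φ y) y) x
      rw [h4, h2] at hp
      exact hp.symm
    exact imp_antisymm _ _ h5 (hle y)

end HilbertAlgebra
end

section
/- Let A be a Hilbert algebra and φ a closure endomorphism of A with kernel J = K_φ = {x ∈ A : φ(x) = 1}. Then J is a monomial filter of A, and for every a ∈ A, φ(a) is the greatest element of the class a/J = {x ∈ A : x → a ∈ J and a → x ∈ J}. -/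
namespace HilbertAlgebra

variable {A : Type*} [HilbertAlgebra A]

/-- Modus ponens in equational form. -/
lemma mp' {a b : A} (ha : a = one) (hab : imp a b = one) : b = one := by
  subst ha
  exact (imp_antisymm one b hab (by have h := imp_one b one; rwa [hab] at h)).symm

lemma imp_self (x : A) : imp x x = one := by
  have h1 : imp x (imp (imp x x) x) = one := imp_one x (imp x x)
  have h2 := imp_distrib x (imp x x) x
  have h3 := mp' h1 h2
  exact mp' (imp_one x x) h3

lemma imp_one' (x : A) : imp x one = one := by
  have h := imp_one x x; rwa [imp_self] at h

lemma le_trans' {x y z : A} (h1 : imp x y = one) (h2 : imp y z = one) :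
    imp x z = one := by
  have h3 : imp x (imp y z) = one := by rw [h2]; exact imp_one' x
  exact mp' h1 (mp' h3 (imp_distrib x y z))

/-- The kernel `J` of a closure endomorphism `φ` is a monomial filter: for each
`a`, `φ a` is the greatest element of the class `a/J`. -/
theorem kernel_monomial (φ : A → A) (hφ : IsClosureEndo φ) :
    IsFilter {x : A | φ x = one} ∧
    ∀ a : A,
      φ a ∈ {x : A | imp x a ∈ {x : A | φ x = one} ∧ imp a x ∈ {x : A | φ x = one}} ∧
      ∀ x ∈ {x : A | imp x a ∈ {x : A | φ x = one} ∧ imp a x ∈ {x : A | φ x = one}},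
        le x (φ a) := by
  obtain ⟨hhom, hle, hidem, hmono⟩ := hφ
  have hone : φ one = one :=
    imp_antisymm (φ one) one (imp_one' (φ one)) (hle one)
  refine ⟨⟨hone, ?_⟩, ?_⟩
  · intro x y hx hxy
    simp only [Set.mem_setOf_eq] at *
    rw [hhom, hx] at hxy
    exact mp' rfl hxy
  · intro a
    refine ⟨⟨?_, ?_⟩, ?_⟩
    · show φ (imp (φ a) a) = one
      rw [hhom, hidem]; exact imp_self (φ a)
    · show φ (imp a (φ a)) = one
      rw [hhom, hidem]; exact imp_self (φ a)
    · rintro x ⟨hx1, _⟩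
      have h1 : imp (φ x) (φ a) = one := by
        have := hx1; simp only [Set.mem_setOf_eq, hhom] at this; exact this
      exact le_trans' (hle x) h1

end HilbertAlgebra
end
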